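/- For 1/2 < γ < 1, the ratio (Σ_{j=1}^{n²−1} e^{j^γ}) / (Σ_{j=1}^{n² + ⌊n^{2(1−γ)}⌋} e^{j^γ}) converges to e^{−γ} as n → ∞. -/

import Mathlib

/-!
Write `S k = ∑_{j ≤ k} e^{j^γ}`. The tangent-line bounds for the concave map `t ↦ t ^ γ` compare
the top terms of `S k` with a geometric series of ratio `e^{-γ k^{γ-1}}`, which gives
`S k ~ k^{1-γ} e^{k^γ} / γ`. For `a = n² - 1` and `b = n² + ⌊n^{2(1-γ)}⌋` we have `a / b → 1`,
while `b - a ~ n^{2(1-γ)}` makes `b^γ - a^γ ~ γ n^{2(γ-1)} (b - a) → γ`; hence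
`S a / S b ~ (a / b)^{1-γ} e^{a^γ - b^γ} → e^{-γ}`.
-/

open Real Filter Finset Topology Asymptotics

theorem rpow_le_rpow_add_mul_sub {p x y : ℝ} (hp0 : 0 ≤ p) (hp1 : p ≤ 1) (hx : 0 < x)
    (hy : 0 ≤ y) : y ^ p ≤ x ^ p + p * x ^ (p - 1) * (y - x) := by
  have hs : -1 ≤ (y - x) / x := by
    rw [le_div_iff₀ hx]; linarith
  have hy_eq : y = x * (1 + (y - x) / x) := by field_simp; ring
  calc y ^ p = x ^ p * (1 + (y - x) / x) ^ p := by
        rw [hy_eq, mul_rpow hx.le (by linarith), ← hy_eq]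
    _ ≤ x ^ p * (1 + p * ((y - x) / x)) := by
        gcongr; exact rpow_one_add_le_one_add_mul_self hs hp0 hp1
    _ = x ^ p + p * x ^ (p - 1) * (y - x) := by
        rw [rpow_sub_one hx.ne']; field_simp

theorem sum_range_pow_exp_neg_le {r : ℝ} (hr : 0 < r) (N : ℕ) :
    ∑ i ∈ range N, exp (-r) ^ i ≤ 1 + 1 / r := by
  have hx0 : 0 < exp (-r) := exp_pos _
  have hx1 : exp (-r) < 1 := exp_lt_one_iff.2 (neg_lt_zero.2 hr)
  have h_exp : exp (-r) * (1 + r) ≤ 1 := by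
    calc exp (-r) * (1 + r) ≤ exp (-r) * exp r := by gcongr; linarith [add_one_le_exp r]
      _ = 1 := by rw [← exp_add, neg_add_cancel, exp_zero]
  calc ∑ i ∈ range N, exp (-r) ^ i ≤ ∑' i, exp (-r) ^ i :=
        Summable.sum_le_tsum _ (fun i _ => by positivity) (summable_geometric_of_lt_one hx0.le hx1)
    _ = (1 - exp (-r))⁻¹ := tsum_geometric_of_lt_one hx0.le hx1
    _ ≤ 1 + 1 / r := by
        rw [inv_le_iff_one_le_mul₀ (by linarith)]
        field_simp
        nlinarith

theorem one_sub_exp_neg_mul_div_le_sum_range {r : ℝ} (hr : 0 < r) (N : ℕ) :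
    (1 - exp (-(r * N))) / r ≤ ∑ i ∈ range N, exp (-r) ^ i := by
  have hx1 : exp (-r) < 1 := exp_lt_one_iff.2 (neg_lt_zero.2 hr)
  have h_le : 1 - exp (-r) ≤ r := by linarith [add_one_le_exp (-r)]
  have h_pow : exp (-(r * N)) = exp (-r) ^ N := by rw [← exp_nat_mul]; ring_nf
  have h_pow_le : exp (-r) ^ N ≤ 1 := pow_le_one₀ (exp_pos _).le hx1.le
  rw [geom_sum_eq hx1.ne, ← neg_div_neg_eq (_ - 1), neg_sub, neg_sub, h_pow]
  exact div_le_div_of_nonneg_left (by linarith) (by linarith) h_le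

theorem sum_Icc_one_eq_sum_range_sub {M : Type*} [AddCommMonoid M] (f : ℕ → M) (n : ℕ) :
    ∑ j ∈ Icc 1 n, f j = ∑ i ∈ range n, f (n - i) := by
  refine sum_nbij' (n - ·) (n - ·) ?_ ?_ ?_ ?_ fun j hj => by rw [Nat.sub_sub_self (mem_Icc.1 hj).2]
  all_goals intro j hj; simp only [mem_Icc, mem_range] at hj ⊢; omega

noncomputable def expRpowSum (γ : ℝ) (n : ℕ) : ℝ :=
  ∑ j ∈ Icc 1 n, exp ((j : ℝ) ^ γ)

theorem expRpowSum_eq_sum_range (γ : ℝ) (n : ℕ) :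
    expRpowSum γ n = ∑ i ∈ range n, exp ((n - i : ℝ) ^ γ) := by
  rw [expRpowSum, sum_Icc_one_eq_sum_range_sub]
  refine sum_congr rfl fun i hi => ?_
  rw [Nat.cast_sub (mem_range.1 hi).le]

theorem expRpowSum_le {γ : ℝ} (hγ0 : 0 < γ) (hγ1 : γ ≤ 1) {n : ℕ} (hn : 0 < n) :
    expRpowSum γ n ≤ exp ((n : ℝ) ^ γ) * (1 + 1 / (γ * (n : ℝ) ^ (γ - 1))) := by
  set r := γ * (n : ℝ) ^ (γ - 1)
  have hn' : (0 : ℝ) < n := Nat.cast_pos.2 hn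
  have hr : 0 < r := by positivity
  have h_term : ∀ i ∈ range n, exp ((n - i : ℝ) ^ γ) ≤ exp ((n : ℝ) ^ γ) * exp (-r) ^ i := by
    intro i hi
    have hi' : (i : ℝ) ≤ n := by exact_mod_cast (mem_range.1 hi).le
    rw [← exp_nat_mul, ← exp_add, exp_le_exp]
    linarith [rpow_le_rpow_add_mul_sub hγ0.le hγ1 hn' (sub_nonneg.2 hi')]
  rw [expRpowSum_eq_sum_range]
  calc _ ≤ ∑ i ∈ range n, exp ((n : ℝ) ^ γ) * exp (-r) ^ i := sum_le_sum h_term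
    _ ≤ _ := by rw [← mul_sum]; gcongr; exact sum_range_pow_exp_neg_le hr n

theorem le_expRpowSum {γ : ℝ} (hγ0 : 0 < γ) (hγ1 : γ ≤ 1) {n L : ℕ} (hL : L < n) :
    exp ((n : ℝ) ^ γ) * (1 - exp (-(γ * ((n : ℝ) - L) ^ (γ - 1) * L))) /
      (γ * ((n : ℝ) - L) ^ (γ - 1)) ≤ expRpowSum γ n := by
  set s := γ * ((n : ℝ) - L) ^ (γ - 1)
  have hnL : (0 : ℝ) < n - L := sub_pos.2 (by exact_mod_cast hL)
  have hs : 0 < s := by positivity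
  have h_term : ∀ i ∈ range L, exp ((n : ℝ) ^ γ) * exp (-s) ^ i ≤ exp ((n - i : ℝ) ^ γ) := by
    intro i hi
    have hi' : (i : ℝ) < L := by exact_mod_cast mem_range.1 hi
    have hj : (0 : ℝ) < n - i := by linarith
    have h_slope : γ * ((n : ℝ) - i) ^ (γ - 1) * i ≤ s * i := by
      gcongr ?_ * _
      exact mul_le_mul_of_nonneg_left
        (rpow_le_rpow_of_nonpos hnL (by linarith) (by linarith)) hγ0.le
    have h_tangent := rpow_le_rpow_add_mul_sub hγ0.le hγ1 hj (Nat.cast_nonneg n)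
    rw [← exp_nat_mul, ← exp_add, exp_le_exp]
    linarith
  rw [expRpowSum_eq_sum_range, mul_div_assoc]
  calc _ ≤ exp ((n : ℝ) ^ γ) * ∑ i ∈ range L, exp (-s) ^ i := by
        gcongr; exact one_sub_exp_neg_mul_div_le_sum_range hs L
    _ ≤ ∑ i ∈ range L, exp ((n - i : ℝ) ^ γ) := by rw [mul_sum]; exact sum_le_sum h_term
    _ ≤ _ := sum_le_sum_of_subset_of_nonneg (range_subset_range.2 hL.le) fun _ _ _ => (exp_pos _).le

theorem expRpowSum_div_le {γ : ℝ} (hγ0 : 0 < γ) (hγ1 : γ ≤ 1) {n : ℕ} (hn : 0 < n) :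
    expRpowSum γ n / ((n : ℝ) ^ (1 - γ) * exp ((n : ℝ) ^ γ) / γ) ≤ 1 + γ * (n : ℝ) ^ (γ - 1) := by
  have hn' : (0 : ℝ) < n := Nat.cast_pos.2 hn
  have h_inv : (n : ℝ) ^ (γ - 1) * (n : ℝ) ^ (1 - γ) = 1 := by
    rw [← rpow_add hn', sub_add_sub_cancel', sub_self, rpow_zero]
  rw [div_le_iff₀ (by positivity)]
  calc expRpowSum γ n ≤ exp ((n : ℝ) ^ γ) * (1 + 1 / (γ * (n : ℝ) ^ (γ - 1))) :=
        expRpowSum_le hγ0 hγ1 hn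
    _ = _ := by
        field_simp
        linear_combination -(1 + γ * (n : ℝ) ^ (γ - 1)) * h_inv

theorem le_expRpowSum_div {γ : ℝ} (hγ0 : 0 < γ) (hγ1 : γ ≤ 1) {n L : ℕ} (hL : L < n) :
    (1 - exp (-(γ * (n : ℝ) ^ (γ - 1) * L))) * (1 - L / n) ≤
      expRpowSum γ n / ((n : ℝ) ^ (1 - γ) * exp ((n : ℝ) ^ γ) / γ) := by
  have hn : (0 : ℝ) < n := by exact_mod_cast (Nat.zero_le L).trans_lt hL
  have hnL : (0 : ℝ) < n - L := sub_pos.2 (by exact_mod_cast hL)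
  have hL_le : (L : ℝ) ≤ n := by exact_mod_cast hL.le
  set s := γ * ((n : ℝ) - L) ^ (γ - 1)
  have h_rate : γ * (n : ℝ) ^ (γ - 1) ≤ s :=
    mul_le_mul_of_nonneg_left (rpow_le_rpow_of_nonpos hnL (by linarith) (by linarith)) hγ0.le
  have h_ratio : 1 - L / n ≤ (((n : ℝ) - L) / n) ^ (1 - γ) := by
    rw [one_sub_div hn.ne']
    exact self_le_rpow_of_le_one (by positivity) ((div_le_one hn).2 (by linarith)) (by linarith)
  have h_exp_le : exp (-(s * L)) ≤ 1 := exp_le_one_iff.2 (by simp only [neg_nonpos]; positivity)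
  have h_inv : ((n : ℝ) - L) ^ (γ - 1) * ((n : ℝ) - L) ^ (1 - γ) = 1 := by
    rw [← rpow_add hnL, sub_add_sub_cancel', sub_self, rpow_zero]
  calc (1 - exp (-(γ * (n : ℝ) ^ (γ - 1) * L))) * (1 - L / n)
      ≤ (1 - exp (-(s * L))) * (((n : ℝ) - L) / n) ^ (1 - γ) := by
        gcongr
        rw [sub_nonneg, div_le_one hn]; exact hL_le
    _ = exp ((n : ℝ) ^ γ) * (1 - exp (-(s * L))) / s /
          ((n : ℝ) ^ (1 - γ) * exp ((n : ℝ) ^ γ) / γ) := by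
        rw [div_rpow hnL.le hn.le]
        field_simp
        rw [eq_div_iff (by positivity)]
        linear_combination (1 - exp (-(s * L))) * γ * h_inv
    _ ≤ _ := by gcongr; exact le_expRpowSum hγ0 hγ1 hL

theorem tendsto_floor_rpow_div_atTop {p : ℝ} (hp : p < 1) :
    Tendsto (fun x : ℝ => (⌊x ^ p⌋₊ : ℝ) / x) atTop (𝓝 0) := by
  have h_lim : Tendsto (fun x : ℝ => x ^ (p - 1)) atTop (𝓝 0) := by
    simpa only [neg_sub] using tendsto_rpow_neg_atTop (sub_pos.2 hp)
  refine tendsto_of_tendsto_of_tendsto_of_le_of_le' tendsto_const_nhds h_lim ?_ ?_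
  · filter_upwards [eventually_ge_atTop 0] with x hx using by positivity
  · filter_upwards [eventually_gt_atTop 0] with x hx
    rw [rpow_sub_one hx.ne']
    gcongr
    exact Nat.floor_le (by positivity)

theorem tendsto_rpow_mul_floor_rpow_atTop {p q : ℝ} (hp : 0 < p) (hpq : 0 < p + q) :
    Tendsto (fun x : ℝ => x ^ q * ⌊x ^ p⌋₊) atTop atTop := by
  refine tendsto_atTop_mono' _ ?_ ((tendsto_rpow_atTop hpq).const_mul_atTop (one_half_pos (α := ℝ)))
  filter_upwards [eventually_ge_atTop 1] with x hx
  have hx0 : 0 < x := by linarith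
  calc 1 / 2 * x ^ (p + q) = x ^ q * (x ^ p / 2) := by rw [rpow_add hx0]; ring
    _ ≤ x ^ q * ⌊x ^ p⌋₊ := by
        gcongr
        exact (Nat.div_two_lt_floor (one_le_rpow hx hp.le)).le

theorem tendsto_rpow_neg_mul_floor_rpow_add_one {p : ℝ} (hp : 0 < p) :
    Tendsto (fun x : ℝ => x ^ (-p) * (⌊x ^ p⌋₊ + 1)) atTop (𝓝 1) := by
  have h_lim : Tendsto (fun x : ℝ => 1 + x ^ (-p)) atTop (𝓝 1) := by
    simpa using (tendsto_rpow_neg_atTop hp).const_add 1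
  refine tendsto_of_tendsto_of_tendsto_of_le_of_le' tendsto_const_nhds h_lim ?_ ?_
  all_goals
    filter_upwards [eventually_gt_atTop 0] with x hx
    have h_inv : x ^ (-p) * x ^ p = 1 := by rw [← rpow_add hx, neg_add_cancel, rpow_zero]
  · calc (1 : ℝ) = x ^ (-p) * x ^ p := h_inv.symm
      _ ≤ _ := by gcongr; exact (Nat.lt_floor_add_one _).le
  · calc _ ≤ x ^ (-p) * (x ^ p + 1) := by gcongr; exact Nat.floor_le (by positivity)
      _ = _ := by rw [mul_add, h_inv, mul_one]

theorem tendsto_expRpowSum_div {γ : ℝ} (hγ0 : 0 < γ) (hγ1 : γ < 1) :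
    Tendsto (fun n : ℕ => expRpowSum γ n / ((n : ℝ) ^ (1 - γ) * exp ((n : ℝ) ^ γ) / γ))
      atTop (𝓝 1) := by
  -- Any exponent strictly between `1 - γ` and `1` works: we need `n ^ (1 - γ) ≪ L n ≪ n`.
  set L : ℕ → ℕ := fun n => ⌊(n : ℝ) ^ (1 - γ / 2)⌋₊
  have hL_div : Tendsto (fun n : ℕ => (L n : ℝ) / n) atTop (𝓝 0) :=
    (tendsto_floor_rpow_div_atTop (by linarith)).comp tendsto_natCast_atTop_atTop
  have hL_mul : Tendsto (fun n : ℕ => γ * (n : ℝ) ^ (γ - 1) * L n) atTop atTop := by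
    have := (tendsto_rpow_mul_floor_rpow_atTop (p := 1 - γ / 2) (q := γ - 1) (by linarith)
      (by linarith)).comp tendsto_natCast_atTop_atTop
    simpa only [mul_assoc, Function.comp_def] using this.const_mul_atTop hγ0
  have h_lower : Tendsto (fun n : ℕ => (1 - exp (-(γ * (n : ℝ) ^ (γ - 1) * L n))) * (1 - L n / n))
      atTop (𝓝 1) := by
    simpa using ((tendsto_exp_atBot.comp (tendsto_neg_atTop_atBot.comp hL_mul)).const_sub 1).mul
      (hL_div.const_sub 1)
  have h_upper : Tendsto (fun n : ℕ => 1 + γ * (n : ℝ) ^ (γ - 1)) atTop (𝓝 1) := by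
    have := ((tendsto_rpow_neg_atTop (sub_pos.2 hγ1)).comp tendsto_natCast_atTop_atTop).const_mul γ
    simpa [neg_sub] using this.const_add 1
  refine tendsto_of_tendsto_of_tendsto_of_le_of_le' h_lower h_upper ?_ ?_
  · filter_upwards [hL_div.eventually (gt_mem_nhds one_pos), eventually_gt_atTop 0] with n hL hn
    refine le_expRpowSum_div hγ0 hγ1.le ?_
    rw [div_lt_one (by exact_mod_cast hn)] at hL
    exact_mod_cast hL
  · filter_upwards [eventually_gt_atTop 0] with n hn using expRpowSum_div_le hγ0 hγ1.le hn

theorem isEquivalent_expRpowSum {γ : ℝ} (hγ0 : 0 < γ) (hγ1 : γ < 1) :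
    expRpowSum γ ~[atTop] fun n : ℕ => (n : ℝ) ^ (1 - γ) * exp ((n : ℝ) ^ γ) / γ :=
  isEquivalent_of_tendsto_one (tendsto_expRpowSum_div hγ0 hγ1)

theorem tendsto_rpow_sub_rpow {ι : Type*} {l : Filter ι} {γ : ℝ} (hγ0 : 0 ≤ γ) (hγ1 : γ ≤ 1)
    {N a b : ι → ℝ} (hpos : ∀ᶠ i in l, 0 < N i ∧ 0 < a i ∧ a i ≤ b i)
    (ha : Tendsto (fun i => a i / N i) l (𝓝 1)) (hb : Tendsto (fun i => b i / N i) l (𝓝 1))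
    (hd : Tendsto (fun i => N i ^ (γ - 1) * (b i - a i)) l (𝓝 1)) :
    Tendsto (fun i => b i ^ γ - a i ^ γ) l (𝓝 γ) := by
  have h_slope : ∀ c : ι → ℝ, (∀ᶠ i in l, 0 < N i ∧ 0 < c i) →
      Tendsto (fun i => c i / N i) l (𝓝 1) →
      Tendsto (fun i => γ * c i ^ (γ - 1) * (b i - a i)) l (𝓝 γ) := by
    intro c hc hcN
    have h_lim := ((hcN.rpow_const (p := γ - 1) (Or.inl one_ne_zero)).mul hd).const_mul γ
    rw [one_rpow, one_mul, mul_one] at h_lim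
    refine h_lim.congr' ?_
    filter_upwards [hc] with i ⟨hN, hci⟩
    rw [div_rpow hci.le hN.le]
    field_simp
  refine tendsto_of_tendsto_of_tendsto_of_le_of_le' (h_slope b ?_ hb) (h_slope a ?_ ha) ?_ ?_
  · filter_upwards [hpos] with i ⟨hN, ha, hab⟩ using ⟨hN, ha.trans_le hab⟩
  · filter_upwards [hpos] with i ⟨hN, ha, _⟩ using ⟨hN, ha⟩
  · filter_upwards [hpos] with i ⟨_, ha, hab⟩
    linarith [rpow_le_rpow_add_mul_sub hγ0 hγ1 (ha.trans_le hab) ha.le]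
  · filter_upwards [hpos] with i ⟨_, ha, hab⟩
    linarith [rpow_le_rpow_add_mul_sub hγ0 hγ1 ha (ha.le.trans hab)]

theorem tendsto_rpow_mul_exp_rpow_div {ι : Type*} {l : Filter ι} {γ c : ℝ} (hγ : γ ≠ 0)
    {a b : ι → ℝ} (hpos : ∀ᶠ i in l, 0 < a i ∧ 0 < b i)
    (hab : Tendsto (fun i => a i / b i) l (𝓝 1))
    (hd : Tendsto (fun i => b i ^ γ - a i ^ γ) l (𝓝 c)) :
    Tendsto (fun i => (a i ^ (1 - γ) * exp (a i ^ γ) / γ) / (b i ^ (1 - γ) * exp (b i ^ γ) / γ))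
      l (𝓝 (exp (-c))) := by
  have h_lim := (hab.rpow_const (p := 1 - γ) (Or.inl one_ne_zero)).mul
    ((continuous_exp.tendsto _).comp hd.neg)
  rw [one_rpow, one_mul] at h_lim
  refine h_lim.congr' ?_
  filter_upwards [hpos] with i ⟨ha, hb⟩
  simp only [Function.comp_apply, neg_sub, exp_sub, div_rpow ha.le hb.le]
  field_simp

theorem tendsto_rpow_mul_exp_rpow_div_sub_one_add_floor {γ : ℝ} (hγ0 : 0 < γ) (hγ1 : γ < 1) :
    Tendsto (fun x : ℝ => ((x - 1) ^ (1 - γ) * exp ((x - 1) ^ γ) / γ) /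
      ((x + ⌊x ^ (1 - γ)⌋₊) ^ (1 - γ) * exp ((x + ⌊x ^ (1 - γ)⌋₊) ^ γ) / γ))
      atTop (𝓝 (exp (-γ))) := by
  have hpos : ∀ᶠ x : ℝ in atTop, 0 < x ∧ 0 < x - 1 ∧ x - 1 ≤ x + ⌊x ^ (1 - γ)⌋₊ := by
    filter_upwards [eventually_gt_atTop 1] with x hx
    exact ⟨by linarith, by linarith, by linarith [Nat.cast_nonneg (α := ℝ) ⌊x ^ (1 - γ)⌋₊]⟩
  have ha : Tendsto (fun x : ℝ => (x - 1) / x) atTop (𝓝 1) := by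
    have := tendsto_inv_atTop_zero.const_sub (1 : ℝ)
    rw [sub_zero] at this
    refine this.congr' ?_
    filter_upwards [eventually_gt_atTop 0] with x hx
    field_simp
  have hb : Tendsto (fun x : ℝ => (x + ⌊x ^ (1 - γ)⌋₊) / x) atTop (𝓝 1) := by
    have := (tendsto_floor_rpow_div_atTop (p := 1 - γ) (by linarith)).const_add 1
    rw [add_zero] at this
    refine this.congr' ?_
    filter_upwards [eventually_gt_atTop 0] with x hx
    field_simp
  have hd : Tendsto (fun x : ℝ => x ^ (γ - 1) * ((x + ⌊x ^ (1 - γ)⌋₊) - (x - 1))) atTop (𝓝 1) := by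
    simpa [neg_sub, add_sub_sub_cancel] using
      tendsto_rpow_neg_mul_floor_rpow_add_one (p := 1 - γ) (by linarith)
  refine tendsto_rpow_mul_exp_rpow_div hγ0.ne' ?_ ?_
    (tendsto_rpow_sub_rpow hγ0.le hγ1.le hpos ha hb hd)
  · filter_upwards [hpos] with x ⟨_, ha, hab⟩ using ⟨ha, ha.trans_le hab⟩
  · have h_lim := ha.div hb one_ne_zero
    rw [div_one] at h_lim
    refine h_lim.congr' ?_
    filter_upwards [eventually_gt_atTop 0] with x hx
    exact div_div_div_cancel_right₀ hx.ne' _ _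

theorem stmt_5 (γ : ℝ) (h1 : 1 / 2 < γ) (h2 : γ < 1) :
    Filter.Tendsto
      (fun n : ℕ =>
        (∑ j ∈ (Finset.Icc 1 (n ^ 2 - 1) : Finset ℕ), Real.exp ((j : ℝ) ^ γ)) /
          ∑ j ∈ Finset.Icc 1 (n ^ 2 + ⌊(n : ℝ) ^ (2 * (1 - γ))⌋₊),
            Real.exp ((j : ℝ) ^ γ))
      Filter.atTop (nhds (Real.exp (-γ))) := by
  have hγ0 : 0 < γ := by linarith
  have h_sq : Tendsto (fun n : ℕ => n ^ 2) atTop atTop := tendsto_pow_atTop two_ne_zero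
  have h_lo : Tendsto (fun n : ℕ => n ^ 2 - 1) atTop atTop :=
    tendsto_sub_atTop_nat 1 |>.comp h_sq
  have h_hi : Tendsto (fun n : ℕ => n ^ 2 + ⌊(n : ℝ) ^ (2 * (1 - γ))⌋₊) atTop atTop :=
    tendsto_atTop_mono (fun n => Nat.le_add_right _ _) h_sq
  have hS := isEquivalent_expRpowSum hγ0 h2
  refine ((hS.comp_tendsto h_lo).div (hS.comp_tendsto h_hi)).tendsto_nhds_iff.2 ?_
  refine ((tendsto_rpow_mul_exp_rpow_div_sub_one_add_floor hγ0 h2).comp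
    (tendsto_natCast_atTop_atTop.comp h_sq)).congr' ?_
  filter_upwards [eventually_ge_atTop 1] with n hn
  have h_pow : ((n : ℝ) ^ 2) ^ (1 - γ) = (n : ℝ) ^ (2 * (1 - γ)) := by
    rw [← rpow_natCast_mul (Nat.cast_nonneg n), Nat.cast_ofNat]
  simp only [Function.comp_apply, Pi.div_apply, Nat.cast_pow, h_pow, Nat.cast_add,
    Nat.cast_sub (Nat.one_le_pow 2 n hn), Nat.cast_one]
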